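/- Assume ρ(ε) < 1. For x₀ ∈ E₁ let (x̂^ε(·, x₀), ŷ^ε(·, x₀)) be the unique fixed point of I^ε_{x₀} in C_β^−(E₁ × E₂), and define the slow-manifold map ĥ^ε : E₁ → E₂ by ĥ^ε(x₀) := (1/ε)∫_{−∞}^0 exp((−s/ε)F) ĝ₂(s, x̂^ε(s, x₀), ŷ^ε(s, x₀)) ds (equivalently ĥ^ε(x₀) = ŷ^ε(0, x₀)). Then ĥ^ε is Lipschitz continuous with ‖ĥ^ε(x₀) − ĥ^ε(x₀')‖ ≤ (−K/(γ + γ_f)) · (1/(1 − ρ(ε))) · ‖x₀ − x₀'‖ for all x₀, x₀' ∈ E₁. -/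

import Mathlib

/-!
Let `β = -γ/ε` and let `D` be the `C_β^-` norm of the difference of the fixed points for `x₀`
and `x₀'`. The nonlinearities are `K`-Lipschitz, so along the two fixed points they differ at
time `s ≤ 0` by at most `K D e^{βs}`. Integrating this against the slow kernel `e^{γ_s (t-s)}`
over `[t, 0]` and against the fast kernel `ε⁻¹ e^{γ_f (t-s)/ε}` over `(-∞, t]` bounds the
`C_β^-` norms of the slow and fast parts of the difference by `‖x₀ - x₀'‖ + εK/(γ+εγ_s) · D`
and `-K/(γ+γ_f) · D`. Adding the two gives `D ≤ ‖x₀ - x₀'‖ + ρ(ε) D`, hence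
`D ≤ ‖x₀ - x₀'‖ / (1 - ρ(ε))`, and the fast bound at `t = 0` is the claim.
-/

open MeasureTheory Real Filter

noncomputable section

/-- Weighted sup-norm `sup_{t ≤ 0} e^{-β t} ‖φ t‖` on `(-∞,0]`. -/
def negNorm {E : Type*} [NormedAddCommGroup E] (β : ℝ) (φ : ℝ → E) : ℝ :=
  ⨆ t : Set.Iic (0 : ℝ), Real.exp (-β * t.1) * ‖φ t.1‖

/-- Membership in the Banach space `C_β^-(E)` of continuous functions on `(-∞,0]`
with finite weighted sup-norm. -/
def MemCneg {E : Type*} [NormedAddCommGroup E] (β : ℝ) (φ : ℝ → E) : Prop :=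
  ContinuousOn φ (Set.Iic 0) ∧
    BddAbove (Set.range fun t : Set.Iic (0 : ℝ) => Real.exp (-β * t.1) * ‖φ t.1‖)

/-- Weighted sup-norm `sup_{t ≥ 0} e^{-β t} ‖φ t‖` on `[0,∞)`. -/
def posNorm {E : Type*} [NormedAddCommGroup E] (β : ℝ) (φ : ℝ → E) : ℝ :=
  ⨆ t : Set.Ici (0 : ℝ), Real.exp (-β * t.1) * ‖φ t.1‖

/-- Membership in the Banach space `C_β^+(E)` of continuous functions on `[0,∞)`
with finite weighted sup-norm. -/
def MemCpos {E : Type*} [NormedAddCommGroup E] (β : ℝ) (φ : ℝ → E) : Prop :=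
  ContinuousOn φ (Set.Ici 0) ∧
    BddAbove (Set.range fun t : Set.Ici (0 : ℝ) => Real.exp (-β * t.1) * ‖φ t.1‖)

variable {E₁ E₂ : Type*}
  [NormedAddCommGroup E₁] [NormedSpace ℝ E₁]
  [NormedAddCommGroup E₂] [NormedSpace ℝ E₂]

/-- Slow component of the Lyapunov–Perron operator `I^ε_{x₀}`. -/
def LPslow (S : E₁ →L[ℝ] E₁) (g1 : ℝ → E₁ → E₂ → E₁) (x0 : E₁)
    (x : ℝ → E₁) (y : ℝ → E₂) (t : ℝ) : E₁ :=
  NormedSpace.exp (t • S) x0 +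
    ∫ s in (0:ℝ)..t, NormedSpace.exp ((t - s) • S) (g1 s (x s) (y s))

/-- Fast component of the Lyapunov–Perron operator `I^ε_{x₀}`. -/
def LPfast (F : E₂ →L[ℝ] E₂) (g2 : ℝ → E₁ → E₂ → E₂) (ε : ℝ)
    (x : ℝ → E₁) (y : ℝ → E₂) (t : ℝ) : E₂ :=
  (1/ε) • ∫ s in Set.Iic t, NormedSpace.exp (((t - s)/ε) • F) (g2 s (x s) (y s))

theorem le_mul_exp_of_exp_neg_mul_le {a b M : ℝ} (h : exp (-b) * a ≤ M) : a ≤ M * exp b := by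
  have := mul_le_mul_of_nonneg_right h (exp_pos b).le
  rwa [mul_right_comm, ← exp_add, neg_add_cancel, exp_zero, one_mul] at this

theorem le_mul_exp_neg_of_exp_mul_add_le {a b c t M : ℝ} (hb : 0 ≤ b)
    (h : exp (c * t) * (a + b) ≤ M) : a ≤ M * exp (-c * t) := by
  refine le_mul_exp_of_exp_neg_mul_le ?_
  rw [neg_mul, neg_neg]
  exact le_trans (by gcongr; exact le_add_of_nonneg_right hb) h

theorem le_of_le_exp_mul_of_le_mul_exp {p q a β C t s : ℝ} (hp : p ≤ exp (a * (t - s)) * q)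
    (hq : q ≤ C * exp (β * s)) : p ≤ C * exp (a * t) * exp ((β - a) * s) :=
  calc p ≤ exp (a * (t - s)) * (C * exp (β * s)) := hp.trans (by gcongr)
    _ = C * exp (a * t) * exp ((β - a) * s) := by
        rw [mul_left_comm, mul_assoc, ← exp_add, ← exp_add]; ring_nf

section WeightedNorm

variable {E : Type*} [NormedAddCommGroup E] {β : ℝ} {φ ψ : ℝ → E}

theorem norm_le_negNorm_mul_exp
    (hφ : BddAbove (Set.range fun t : Set.Iic (0 : ℝ) => exp (-β * t.1) * ‖φ t.1‖))
    {s : ℝ} (hs : s ≤ 0) : ‖φ s‖ ≤ negNorm β φ * exp (β * s) :=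
  le_mul_exp_of_exp_neg_mul_le <| by
    simpa only [negNorm, neg_mul] using le_ciSup hφ (⟨s, hs⟩ : Set.Iic (0 : ℝ))

theorem negNorm_le {C : ℝ} (h : ∀ t ≤ 0, ‖φ t‖ ≤ C * exp (β * t)) : negNorm β φ ≤ C := by
  have : Nonempty (Set.Iic (0 : ℝ)) := ⟨⟨0, Set.self_mem_Iic⟩⟩
  refine ciSup_le fun t => ?_
  calc exp (-β * t) * ‖φ t‖ ≤ exp (-β * t) * (C * exp (β * t)) := by gcongr; exact h t t.2
    _ = C := by rw [mul_left_comm, ← exp_add, neg_mul, neg_add_cancel, exp_zero, mul_one]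

theorem MemCneg.sub (hφ : MemCneg β φ) (hψ : MemCneg β ψ) : MemCneg β (φ - ψ) := by
  obtain ⟨a, ha⟩ := hφ.2
  obtain ⟨b, hb⟩ := hψ.2
  refine ⟨hφ.1.sub hψ.1, a + b, ?_⟩
  rintro _ ⟨t, rfl⟩
  calc exp (-β * t) * ‖φ t - ψ t‖ ≤ exp (-β * t) * ‖φ t‖ + exp (-β * t) * ‖ψ t‖ := by
        rw [← mul_add]; gcongr; exact norm_sub_le _ _
    _ ≤ a + b := add_le_add (ha ⟨t, rfl⟩) (hb ⟨t, rfl⟩)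

end WeightedNorm

section Caratheodory

variable {E F G : Type*} [NormedAddCommGroup E] [NormedAddCommGroup F] [NormedAddCommGroup G]

theorem continuous_uncurry_of_norm_sub_le {g : E → F → G} {K : ℝ}
    (hg : ∀ x₁ y₁ x₂ y₂, ‖g x₁ y₁ - g x₂ y₂‖ ≤ K * (‖x₁ - x₂‖ + ‖y₁ - y₂‖)) :
    Continuous fun p : E × F => g p.1 p.2 := by
  refine continuous_iff_continuousAt.2 fun q => tendsto_iff_norm_sub_tendsto_zero.2 ?_
  refine squeeze_zero (fun _ => norm_nonneg _) (fun p => hg _ _ _ _) ?_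
  have : Continuous fun p : E × F => K * (‖p.1 - q.1‖ + ‖p.2 - q.2‖) := by fun_prop
  simpa using this.tendsto q

variable [MeasurableSpace E] [BorelSpace E] [SecondCountableTopology E]
  [MeasurableSpace F] [BorelSpace F] [SecondCountableTopology F]
  [MeasurableSpace G] [BorelSpace G] [SecondCountableTopology G]

theorem ContinuousOn.aestronglyMeasurable_comp_of_measurable {g : ℝ → E → F → G}
    (hgm : ∀ x y, Measurable fun t => g t x y) (hgc : ∀ t, Continuous fun p : E × F => g t p.1 p.2)
    {s : Set ℝ} (hs : MeasurableSet s) {u : ℝ → E} {v : ℝ → F}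
    (hu : ContinuousOn u s) (hv : ContinuousOn v s) :
    AEStronglyMeasurable (fun t => g t (u t) (v t)) (volume.restrict s) := by
  have hg : Measurable (Function.uncurry fun (p : E × F) (t : ℝ) => g t p.1 p.2) :=
    measurable_uncurry_of_continuous_of_measurable hgc fun p => hgm p.1 p.2
  exact (hg.comp_aemeasurable (((hu.aemeasurable hs).prodMk (hv.aemeasurable hs)).prodMk
    aemeasurable_id)).aestronglyMeasurable

end Caratheodory

section Kernels

variable {E : Type*} [NormedAddCommGroup E] [NormedSpace ℝ E]
  {A : E →L[ℝ] E} {a β C t : ℝ} {h : ℝ → E}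

theorem continuous_exp_smul [CompleteSpace E] (A : E →L[ℝ] E) :
    Continuous fun u : ℝ => NormedSpace.exp (u • A) :=
  continuous_iff_continuousAt.2 fun u => (hasDerivAt_exp_smul_const A u).continuousAt

theorem aestronglyMeasurable_exp_smul_apply [CompleteSpace E] {μ : Measure ℝ}
    (hm : AEStronglyMeasurable h μ) :
    AEStronglyMeasurable (fun s => NormedSpace.exp ((t - s) • A) (h s)) μ :=
  isBoundedBilinearMap_apply.continuous.comp_aestronglyMeasurable
    (((continuous_exp_smul A).comp (continuous_sub_left t)).aestronglyMeasurable.prodMk hm)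

theorem intervalIntegrable_exp_smul_apply [CompleteSpace E]
    (hA : ∀ τ ≤ 0, ∀ x, ‖NormedSpace.exp (τ • A) x‖ ≤ exp (a * τ) * ‖x‖)
    (hm : AEStronglyMeasurable h (volume.restrict (Set.Iic 0)))
    (hh : ∀ s ≤ 0, ‖h s‖ ≤ C * exp (β * s)) (ht : t ≤ 0) :
    IntervalIntegrable (fun s => NormedSpace.exp ((t - s) • A) (h s)) volume 0 t := by
  rw [intervalIntegrable_iff, Set.uIoc_of_ge ht]
  refine Integrable.mono' (g := fun s => C * exp (a * t) * exp ((β - a) * s))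
    (by fun_prop : Continuous _).integrableOn_Ioc
    (aestronglyMeasurable_exp_smul_apply (hm.mono_set fun s hs => hs.2))
    ((ae_restrict_iff' measurableSet_Ioc).2 (ae_of_all _ fun s hs =>
      le_of_le_exp_mul_of_le_mul_exp (hA _ (by linarith [hs.1]) _) (hh s hs.2)))

theorem norm_integral_exp_smul_apply_le
    (hA : ∀ τ ≤ 0, ∀ x, ‖NormedSpace.exp (τ • A) x‖ ≤ exp (a * τ) * ‖x‖)
    (hh : ∀ s ≤ 0, ‖h s‖ ≤ C * exp (β * s)) (ht : t ≤ 0) (hβa : β < a) :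
    ‖∫ s in (0 : ℝ)..t, NormedSpace.exp ((t - s) • A) (h s)‖ ≤ C * exp (β * t) / (a - β) := by
  have hC : 0 ≤ C := by simpa using (norm_nonneg _).trans (hh 0 le_rfl)
  have hg : IntegrableOn (fun s => C * exp (a * t) * exp ((β - a) * s)) (Set.Ioi t) :=
    (integrableOn_exp_mul_Ioi (by linarith) t).const_mul _
  rw [intervalIntegral.integral_symm, norm_neg, intervalIntegral.integral_of_le ht]
  calc ‖∫ s in Set.Ioc t 0, NormedSpace.exp ((t - s) • A) (h s)‖
      ≤ ∫ s in Set.Ioc t 0, C * exp (a * t) * exp ((β - a) * s) :=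
        norm_integral_le_of_norm_le (hg.mono_set Set.Ioc_subset_Ioi_self)
          ((ae_restrict_iff' measurableSet_Ioc).2 (ae_of_all _ fun s hs =>
            le_of_le_exp_mul_of_le_mul_exp (hA _ (by linarith [hs.1]) _) (hh s hs.2)))
    _ ≤ ∫ s in Set.Ioi t, C * exp (a * t) * exp ((β - a) * s) :=
        setIntegral_mono_set hg (ae_of_all _ fun s => by positivity)
          Set.Ioc_subset_Ioi_self.eventuallyLE
    _ = C * exp (β * t) / (a - β) := by
        rw [integral_const_mul, integral_exp_mul_Ioi (by linarith), mul_assoc, mul_div_assoc',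
          mul_neg, ← exp_add, neg_div, ← div_neg, neg_sub]
        ring_nf

theorem integrableOn_Iic_exp_smul_apply [CompleteSpace E]
    (hA : ∀ τ ≥ 0, ∀ x, ‖NormedSpace.exp (τ • A) x‖ ≤ exp (a * τ) * ‖x‖)
    (hm : AEStronglyMeasurable h (volume.restrict (Set.Iic 0)))
    (hh : ∀ s ≤ 0, ‖h s‖ ≤ C * exp (β * s)) (ht : t ≤ 0) (hβa : a < β) :
    IntegrableOn (fun s => NormedSpace.exp ((t - s) • A) (h s)) (Set.Iic t) :=
  Integrable.mono' ((integrableOn_exp_mul_Iic (sub_pos.2 hβa) t).const_mul (C * exp (a * t)))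
    (aestronglyMeasurable_exp_smul_apply (hm.mono_set (Set.Iic_subset_Iic.2 ht)))
    ((ae_restrict_iff' measurableSet_Iic).2 (ae_of_all _ fun s (hs : s ≤ t) =>
      le_of_le_exp_mul_of_le_mul_exp (hA _ (by linarith) _) (hh s (hs.trans ht))))

theorem norm_setIntegral_Iic_exp_smul_apply_le
    (hA : ∀ τ ≥ 0, ∀ x, ‖NormedSpace.exp (τ • A) x‖ ≤ exp (a * τ) * ‖x‖)
    (hh : ∀ s ≤ 0, ‖h s‖ ≤ C * exp (β * s)) (ht : t ≤ 0) (hβa : a < β) :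
    ‖∫ s in Set.Iic t, NormedSpace.exp ((t - s) • A) (h s)‖ ≤ C * exp (β * t) / (β - a) := by
  calc ‖∫ s in Set.Iic t, NormedSpace.exp ((t - s) • A) (h s)‖
      ≤ ∫ s in Set.Iic t, C * exp (a * t) * exp ((β - a) * s) :=
        norm_integral_le_of_norm_le ((integrableOn_exp_mul_Iic (sub_pos.2 hβa) t).const_mul _)
          ((ae_restrict_iff' measurableSet_Iic).2 (ae_of_all _ fun s (hs : s ≤ t) =>
            le_of_le_exp_mul_of_le_mul_exp (hA _ (by linarith) _) (hh s (hs.trans ht))))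
    _ = C * exp (β * t) / (β - a) := by
        rw [integral_const_mul, integral_exp_mul_Iic (sub_pos.2 hβa), mul_assoc, mul_div_assoc',
          ← exp_add]
        ring_nf

end Kernels

section Nemytskii

variable {E F G : Type*} [NormedAddCommGroup E] [NormedAddCommGroup F] [NormedAddCommGroup G]
  {g : ℝ → E → F → G} {K β a b : ℝ}

theorem norm_comp_sub_comp_le_mul_exp (hK : 0 ≤ K)
    (hgl : ∀ t x₁ y₁ x₂ y₂, ‖g t x₁ y₁ - g t x₂ y₂‖ ≤ K * (‖x₁ - x₂‖ + ‖y₁ - y₂‖))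
    {u u' : ℝ → E} {v v' : ℝ → F} (hu : ∀ s ≤ 0, ‖u s - u' s‖ ≤ a * exp (β * s))
    (hv : ∀ s ≤ 0, ‖v s - v' s‖ ≤ b * exp (β * s)) {s : ℝ} (hs : s ≤ 0) :
    ‖g s (u s) (v s) - g s (u' s) (v' s)‖ ≤ K * (a + b) * exp (β * s) :=
  (hgl _ _ _ _ _).trans <| by rw [mul_assoc, add_mul]; gcongr; exacts [hu s hs, hv s hs]

theorem norm_comp_le_mul_exp {M : ℝ} (hK : 0 ≤ K)
    (hgl : ∀ t x₁ y₁ x₂ y₂, ‖g t x₁ y₁ - g t x₂ y₂‖ ≤ K * (‖x₁ - x₂‖ + ‖y₁ - y₂‖))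
    (hg0 : ∀ s ≤ 0, ‖g s 0 0‖ ≤ M * exp (β * s))
    {u : ℝ → E} {v : ℝ → F} (hu : ∀ s ≤ 0, ‖u s‖ ≤ a * exp (β * s))
    (hv : ∀ s ≤ 0, ‖v s‖ ≤ b * exp (β * s)) {s : ℝ} (hs : s ≤ 0) :
    ‖g s (u s) (v s)‖ ≤ (K * (a + b) + M) * exp (β * s) := by
  have hdiff := norm_comp_sub_comp_le_mul_exp (u' := 0) (v' := 0) hK hgl
    (by simpa using hu) (by simpa using hv) hs
  calc ‖g s (u s) (v s)‖ ≤ ‖g s (u s) (v s) - g s 0 0‖ + ‖g s 0 0‖ := norm_le_norm_sub_add _ _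
    _ ≤ K * (a + b) * exp (β * s) + M * exp (β * s) := add_le_add hdiff (hg0 s hs)
    _ = (K * (a + b) + M) * exp (β * s) := by ring

end Nemytskii

section LyapunovPerron

variable {E₁ E₂ : Type*}
  [NormedAddCommGroup E₁] [NormedAddCommGroup E₂]
  [MeasurableSpace E₁] [BorelSpace E₁] [SecondCountableTopology E₁]
  [MeasurableSpace E₂] [BorelSpace E₂] [SecondCountableTopology E₂]
  {β K M : ℝ} {u u' : ℝ → E₁} {v v' : ℝ → E₂} {t : ℝ}

theorem norm_LPslow_sub_LPslow_le [NormedSpace ℝ E₁] [CompleteSpace E₁]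
    {S : E₁ →L[ℝ] E₁} {γs : ℝ}
    (hS : ∀ τ ≤ (0:ℝ), ∀ x : E₁, ‖NormedSpace.exp (τ • S) x‖ ≤ exp (γs * τ) * ‖x‖)
    (hβ : β < γs) {g : ℝ → E₁ → E₂ → E₁} (hgm : ∀ x y, Measurable fun t => g t x y)
    (hK : 0 ≤ K) (hgl : ∀ t x₁ y₁ x₂ y₂, ‖g t x₁ y₁ - g t x₂ y₂‖ ≤ K * (‖x₁ - x₂‖ + ‖y₁ - y₂‖))
    (hg0 : ∀ s ≤ 0, ‖g s 0 0‖ ≤ M * exp (β * s))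
    (hu : MemCneg β u) (hv : MemCneg β v) (hu' : MemCneg β u') (hv' : MemCneg β v')
    (x0 x0' : E₁) (ht : t ≤ 0) :
    ‖LPslow S g x0 u v t - LPslow S g x0' u' v' t‖ ≤
      (‖x0 - x0'‖ + K * (negNorm β (u - u') + negNorm β (v - v')) / (γs - β)) * exp (β * t) := by
  have hint : ∀ {w : ℝ → E₁} {z : ℝ → E₂}, MemCneg β w → MemCneg β z →
      IntervalIntegrable (fun s => NormedSpace.exp ((t - s) • S) (g s (w s) (z s))) volume 0 t :=
    fun hw hz => intervalIntegrable_exp_smul_apply hS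
      (hw.1.aestronglyMeasurable_comp_of_measurable hgm
        (fun s => continuous_uncurry_of_norm_sub_le (hgl s)) measurableSet_Iic hz.1)
      (fun _ => norm_comp_le_mul_exp hK hgl hg0
        (fun _ => norm_le_negNorm_mul_exp hw.2) (fun _ => norm_le_negNorm_mul_exp hz.2))
      ht
  have hx0 : ‖NormedSpace.exp (t • S) (x0 - x0')‖ ≤ ‖x0 - x0'‖ * exp (β * t) := by
    refine (hS t ht _).trans ?_
    rw [mul_comm]
    exact mul_le_mul_of_nonneg_left (exp_le_exp.2 (by nlinarith)) (norm_nonneg _)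
  have hdiff := norm_integral_exp_smul_apply_le hS
    (fun _ => norm_comp_sub_comp_le_mul_exp hK hgl
      (fun _ => norm_le_negNorm_mul_exp (hu.sub hu').2)
      (fun _ => norm_le_negNorm_mul_exp (hv.sub hv').2)) ht hβ
  simp only [map_sub] at hdiff
  calc ‖LPslow S g x0 u v t - LPslow S g x0' u' v' t‖
      = ‖NormedSpace.exp (t • S) (x0 - x0') + ∫ s in (0:ℝ)..t,
          (NormedSpace.exp ((t - s) • S) (g s (u s) (v s)) -
            NormedSpace.exp ((t - s) • S) (g s (u' s) (v' s)))‖ := by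
        rw [LPslow, LPslow, intervalIntegral.integral_sub (hint hu hv) (hint hu' hv'), map_sub]
        abel_nf
    _ ≤ ‖x0 - x0'‖ * exp (β * t) +
          K * (negNorm β (u - u') + negNorm β (v - v')) * exp (β * t) / (γs - β) :=
        (norm_add_le _ _).trans (add_le_add hx0 hdiff)
    _ = _ := by ring

theorem norm_LPfast_sub_LPfast_le [NormedSpace ℝ E₂] [CompleteSpace E₂] {F : E₂ →L[ℝ] E₂}
    {γf ε : ℝ} (hF : ∀ τ ≥ (0:ℝ), ∀ y : E₂, ‖NormedSpace.exp (τ • F) y‖ ≤ exp (γf * τ) * ‖y‖)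
    (hε : 0 < ε) (hβ : γf < ε * β) {g : ℝ → E₁ → E₂ → E₂}
    (hgm : ∀ x y, Measurable fun t => g t x y)
    (hK : 0 ≤ K) (hgl : ∀ t x₁ y₁ x₂ y₂, ‖g t x₁ y₁ - g t x₂ y₂‖ ≤ K * (‖x₁ - x₂‖ + ‖y₁ - y₂‖))
    (hg0 : ∀ s ≤ 0, ‖g s 0 0‖ ≤ M * exp (β * s))
    (hu : MemCneg β u) (hv : MemCneg β v) (hu' : MemCneg β u') (hv' : MemCneg β v')
    (ht : t ≤ 0) :
    ‖LPfast F g ε u v t - LPfast F g ε u' v' t‖ ≤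
      K * (negNorm β (u - u') + negNorm β (v - v')) / (ε * β - γf) * exp (β * t) := by
  -- In the time `t - s` the fast kernel is the semigroup of `ε⁻¹ • F`, decaying at rate `γf / ε`.
  have hA : ∀ τ ≥ (0:ℝ), ∀ y : E₂, ‖NormedSpace.exp (τ • ε⁻¹ • F) y‖ ≤ exp (γf / ε * τ) * ‖y‖ :=
    fun τ hτ y => by
      simpa [smul_smul, mul_comm τ, div_eq_mul_inv, mul_assoc] using
        hF (ε⁻¹ * τ) (by positivity) y
  have hβ' : γf / ε < β := by rwa [div_lt_iff₀' hε]
  have hint : ∀ {w : ℝ → E₁} {z : ℝ → E₂}, MemCneg β w → MemCneg β z →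
      IntegrableOn (fun s => NormedSpace.exp ((t - s) • ε⁻¹ • F) (g s (w s) (z s))) (Set.Iic t) :=
    fun hw hz => integrableOn_Iic_exp_smul_apply hA
      (hw.1.aestronglyMeasurable_comp_of_measurable hgm
        (fun s => continuous_uncurry_of_norm_sub_le (hgl s)) measurableSet_Iic hz.1)
      (fun _ => norm_comp_le_mul_exp hK hgl hg0
        (fun _ => norm_le_negNorm_mul_exp hw.2) (fun _ => norm_le_negNorm_mul_exp hz.2))
      ht hβ'
  have hdiff := norm_setIntegral_Iic_exp_smul_apply_le hA
    (fun _ => norm_comp_sub_comp_le_mul_exp hK hgl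
      (fun _ => norm_le_negNorm_mul_exp (hu.sub hu').2)
      (fun _ => norm_le_negNorm_mul_exp (hv.sub hv').2)) ht hβ'
  simp only [map_sub] at hdiff
  have hresc : ∀ s, ((t - s) / ε) • F = (t - s) • ε⁻¹ • F := fun s => by
    rw [smul_smul, div_eq_mul_inv]
  calc ‖LPfast F g ε u v t - LPfast F g ε u' v' t‖
      = ε⁻¹ * ‖∫ s in Set.Iic t,
          (NormedSpace.exp ((t - s) • ε⁻¹ • F) (g s (u s) (v s)) -
            NormedSpace.exp ((t - s) • ε⁻¹ • F) (g s (u' s) (v' s)))‖ := by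
        simp only [LPfast, hresc]
        rw [← smul_sub, ← integral_sub (hint hu hv) (hint hu' hv'), norm_smul, one_div,
          norm_inv, norm_of_nonneg hε.le]
    _ ≤ ε⁻¹ * (K * (negNorm β (u - u') + negNorm β (v - v')) * exp (β * t) / (β - γf / ε)) := by
        gcongr
    _ = _ := by field_simp

end LyapunovPerron

theorem le_mul_div_one_sub_of_le_add_mul {x y a c₁ c₂ : ℝ} (hc₂ : 0 ≤ c₂) (hc : c₁ + c₂ < 1)
    (hx : x ≤ a + c₁ * (x + y)) (hy : y ≤ c₂ * (x + y)) :
    y ≤ c₂ * (1 / (1 - (c₁ + c₂))) * a := by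
  have hxy : x + y ≤ a / (1 - (c₁ + c₂)) := by
    rw [le_div_iff₀ (by linarith)]
    linarith
  calc y ≤ c₂ * (a / (1 - (c₁ + c₂))) := hy.trans (mul_le_mul_of_nonneg_left hxy hc₂)
    _ = c₂ * (1 / (1 - (c₁ + c₂))) * a := by ring

theorem slowManifold_map_lipschitz_general
    {E₁ E₂ : Type*}
    [NormedAddCommGroup E₁] [NormedSpace ℝ E₁] [FiniteDimensional ℝ E₁] [MeasurableSpace E₁] [BorelSpace E₁]
    [NormedAddCommGroup E₂] [NormedSpace ℝ E₂] [FiniteDimensional ℝ E₂] [MeasurableSpace E₂] [BorelSpace E₂]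
    (S : E₁ →L[ℝ] E₁) (F : E₂ →L[ℝ] E₂)
    (γs γf γ K ε : ℝ)
    (hγs : 0 < γs) (hγ : 0 < γ) (hK : 0 < K)
    (hgap : K < -(γ + γf)) (hε : 0 < ε)
    (hS : ∀ t ≤ (0:ℝ), ∀ x : E₁, ‖NormedSpace.exp (t • S) x‖ ≤ Real.exp (γs * t) * ‖x‖)
    (hF : ∀ t ≥ (0:ℝ), ∀ y : E₂, ‖NormedSpace.exp (t • F) y‖ ≤ Real.exp (γf * t) * ‖y‖)
    (g1 : ℝ → E₁ → E₂ → E₁) (g2 : ℝ → E₁ → E₂ → E₂)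
    (hg1m : ∀ x y, Measurable fun t => g1 t x y)
    (hg2m : ∀ x y, Measurable fun t => g2 t x y)
    (hg1l : ∀ t x₁ y₁ x₂ y₂, ‖g1 t x₁ y₁ - g1 t x₂ y₂‖ ≤ K * (‖x₁ - x₂‖ + ‖y₁ - y₂‖))
    (hg2l : ∀ t x₁ y₁ x₂ y₂, ‖g2 t x₁ y₁ - g2 t x₂ y₂‖ ≤ K * (‖x₁ - x₂‖ + ‖y₁ - y₂‖))
    (hg0 : ∃ M, ∀ t ≤ (0:ℝ),
      Real.exp ((γ/ε) * t) * (‖g1 t 0 0‖ + ‖g2 t 0 0‖) ≤ M)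
    (hρ : (ε * K / (γ + ε * γs) - K / (γ + γf)) < 1) :
    ∀ (x0 x0' : E₁) (xh : ℝ → E₁) (yh : ℝ → E₂) (xh' : ℝ → E₁) (yh' : ℝ → E₂),
      (MemCneg (-γ/ε) xh ∧ MemCneg (-γ/ε) yh) →
      (∀ t ≤ (0:ℝ), xh t = LPslow S g1 x0 xh yh t ∧ yh t = LPfast F g2 ε xh yh t) →
      (MemCneg (-γ/ε) xh' ∧ MemCneg (-γ/ε) yh') →
      (∀ t ≤ (0:ℝ), xh' t = LPslow S g1 x0' xh' yh' t ∧ yh' t = LPfast F g2 ε xh' yh' t) →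
      ‖yh 0 - yh' 0‖ ≤ (-K / (γ + γf)) * (1 / (1 - (ε * K / (γ + ε * γs) - K / (γ + γf)))) * ‖x0 - x0'‖ := by
  intro x0 x0' xh yh xh' yh' ⟨hx, hy⟩ hfix ⟨hx', hy'⟩ hfix'
  set β := -γ / ε
  have hεβ : ε * β = -γ := mul_div_cancel₀ _ hε.ne'
  obtain ⟨M, hM⟩ := hg0
  have hM1 : ∀ s ≤ 0, ‖g1 s 0 0‖ ≤ M * exp (β * s) := fun s hs => by
    simpa only [β, neg_div] using le_mul_exp_neg_of_exp_mul_add_le (norm_nonneg _) (hM s hs)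
  have hM2 : ∀ s ≤ 0, ‖g2 s 0 0‖ ≤ M * exp (β * s) := fun s hs => by
    simpa only [β, neg_div] using le_mul_exp_neg_of_exp_mul_add_le (norm_nonneg _)
      ((add_comm ‖g1 s 0 0‖ _) ▸ hM s hs)
  have hβs : β < γs := (div_neg_of_neg_of_pos (neg_neg_of_pos hγ) hε).trans hγs
  have hslow : K / (γs - β) = ε * K / (γ + ε * γs) := by
    rw [div_eq_div_iff (by linarith) (by positivity)]
    linear_combination K * hεβ
  have hfast : K / (ε * β - γf) = -K / (γ + γf) := by
    rw [hεβ, div_eq_div_iff (by linarith) (by linarith)]; ring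
  set D := negNorm β (xh - xh') + negNorm β (yh - yh')
  have hDx : negNorm β (xh - xh') ≤ ‖x0 - x0'‖ + ε * K / (γ + ε * γs) * D := by
    refine negNorm_le fun t ht => ?_
    rw [← hslow, div_mul_eq_mul_div, Pi.sub_apply, (hfix t ht).1, (hfix' t ht).1]
    exact norm_LPslow_sub_LPslow_le hS hβs hg1m hK.le hg1l hM1 hx hy hx' hy' x0 x0' ht
  have hDy : negNorm β (yh - yh') ≤ -K / (γ + γf) * D := by
    refine negNorm_le fun t ht => ?_
    rw [← hfast, div_mul_eq_mul_div, Pi.sub_apply, (hfix t ht).2, (hfix' t ht).2]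
    exact norm_LPfast_sub_LPfast_le hF hε (by linarith) hg2m hK.le hg2l hM2 hx hy hx' hy' ht
  have hρ_eq : ε * K / (γ + ε * γs) - K / (γ + γf) = ε * K / (γ + ε * γs) + -K / (γ + γf) := by
    ring
  calc ‖yh 0 - yh' 0‖ ≤ negNorm β (yh - yh') := by
        simpa using norm_le_negNorm_mul_exp (hy.sub hy').2 le_rfl
    _ ≤ _ := hρ_eq ▸ le_mul_div_one_sub_of_le_add_mul
        (div_nonneg_of_nonpos (by linarith) (by linarith)) (hρ_eq ▸ hρ) hDx hDy

/-- The slow-manifold map `ĥ^ε(x₀) = ŷ^ε(0,x₀)` is Lipschitz with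
constant `(-K/(γ+γ_f))·(1/(1-ρ(ε)))`. -/
theorem slowManifold_map_lipschitz
    {E₁ E₂ : Type*}
    [NormedAddCommGroup E₁] [NormedSpace ℝ E₁] [FiniteDimensional ℝ E₁] [MeasurableSpace E₁] [BorelSpace E₁]
    [NormedAddCommGroup E₂] [NormedSpace ℝ E₂] [FiniteDimensional ℝ E₂] [MeasurableSpace E₂] [BorelSpace E₂]
    (S : E₁ →L[ℝ] E₁) (F : E₂ →L[ℝ] E₂)
    (γs γf γ K ε : ℝ)
    (hγs : 0 < γs) (hγf : γf < 0) (hγ : 0 < γ) (hK : 0 < K)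
    (hgap : K < -(γ + γf)) (hε : 0 < ε)
    (hS : ∀ t ≤ (0:ℝ), ∀ x : E₁, ‖NormedSpace.exp (t • S) x‖ ≤ Real.exp (γs * t) * ‖x‖)
    (hF : ∀ t ≥ (0:ℝ), ∀ y : E₂, ‖NormedSpace.exp (t • F) y‖ ≤ Real.exp (γf * t) * ‖y‖)
    (g1 : ℝ → E₁ → E₂ → E₁) (g2 : ℝ → E₁ → E₂ → E₂)
    (hg1m : ∀ x y, Measurable fun t => g1 t x y)
    (hg2m : ∀ x y, Measurable fun t => g2 t x y)
    (hg1b : ∀ x y r, ∃ M, ∀ t : ℝ, |t| ≤ r → ‖g1 t x y‖ ≤ M)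
    (hg2b : ∀ x y r, ∃ M, ∀ t : ℝ, |t| ≤ r → ‖g2 t x y‖ ≤ M)
    (hg1l : ∀ t x₁ y₁ x₂ y₂, ‖g1 t x₁ y₁ - g1 t x₂ y₂‖ ≤ K * (‖x₁ - x₂‖ + ‖y₁ - y₂‖))
    (hg2l : ∀ t x₁ y₁ x₂ y₂, ‖g2 t x₁ y₁ - g2 t x₂ y₂‖ ≤ K * (‖x₁ - x₂‖ + ‖y₁ - y₂‖))
    (hg0 : ∃ M, ∀ t ≤ (0:ℝ),
      Real.exp ((γ/ε) * t) * (‖g1 t 0 0‖ + ‖g2 t 0 0‖) ≤ M)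
    (hρ : (ε * K / (γ + ε * γs) - K / (γ + γf)) < 1) :
    ∀ (x0 x0' : E₁) (xh : ℝ → E₁) (yh : ℝ → E₂) (xh' : ℝ → E₁) (yh' : ℝ → E₂),
      (MemCneg (-γ/ε) xh ∧ MemCneg (-γ/ε) yh) →
      (∀ t ≤ (0:ℝ), xh t = LPslow S g1 x0 xh yh t ∧ yh t = LPfast F g2 ε xh yh t) →
      (MemCneg (-γ/ε) xh' ∧ MemCneg (-γ/ε) yh') →
      (∀ t ≤ (0:ℝ), xh' t = LPslow S g1 x0' xh' yh' t ∧ yh' t = LPfast F g2 ε xh' yh' t) →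
      ‖yh 0 - yh' 0‖ ≤ (-K / (γ + γf)) * (1 / (1 - (ε * K / (γ + ε * γs) - K / (γ + γf)))) * ‖x0 - x0'‖ :=
  slowManifold_map_lipschitz_general S F γs γf γ K ε hγs hγ hK hgap hε hS hF g1 g2 hg1m hg2m hg1l
    hg2l hg0 hρ
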